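/- arXiv:1608.07956 — 5 statements merged into one kernel-verified Lean document; each statement's English description precedes it below -/
import Mathlib

section
/- Let $x \in H^1([0,T],\mathbb{R})$ with $x(0)=0$, let $t_* \in [0,T]$ be a point where $\delta := \max_{[0,t_*]} x$ is attained (with $\delta \ge 0$), and define $\tilde x(t) = -|x(t)|$ for $t \in [0,t_*]$ (reflecting the positive part) and $\tilde x(t) = x(t) - 2\delta$ for $t \in [t_*,T]$. If $x(t_*)=\delta$, then $\tilde x \in H^1([0,T],\mathbb{R})$, $\tilde x(t) \le 0$ for all $t \in [0,t_*]$, $|\dot{\tilde x}(t)| = |\dot x(t)|$ for a.e. $t$, and $\tilde x(t) \le x(t)$ for all $t \in [0,T]$. -/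
open MeasureTheory Set Filter Topology

/-! On `[0, t*]` the deformation is `-|x|`, whose speed agrees with that of `x` except at zeros of
`x` where `x` has nonzero derivative; such zeros are isolated, hence countably many. On `(t*, T]`
it is a translate of `x`. The two pieces agree at `t*` because `x(t*) = δ ≥ 0`. -/

theorem ContinuousOn.ite_le {α β : Type*} [TopologicalSpace α] [LinearOrder α]
    [OrderClosedTopology α] [TopologicalSpace β] {s : Set α} {a : α} {f g : α → β}
    (hf : ContinuousOn f (s ∩ Iic a)) (hg : ContinuousOn g (s ∩ Ici a))
    (ha : a ∈ s → f a = g a) :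
    ContinuousOn (fun t => if t ≤ a then f t else g t) s := by
  refine ContinuousOn.if (fun t ht => ?_) (hf.mono ?_) (hg.mono ?_)
  · obtain rfl : t = a := frontier_le_subset_eq continuous_id continuous_const ht.2
    exact ha ht.1
  · exact inter_subset_inter_right s (isClosed_Iic.closure_subset_iff.2 fun _ h => h)
  · exact inter_subset_inter_right s (isClosed_Ici.closure_subset_iff.2 fun _ h => (not_le.1 h).le)

theorem isDiscrete_setOf_eq_and_deriv_ne_zero {F : Type*} [NormedAddCommGroup F]
    [NormedSpace ℝ F] (f : ℝ → F) (c : F) :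
    IsDiscrete {t | f t = c ∧ deriv f t ≠ 0} := by
  refine .of_nhdsWithin fun t ⟨_, ht⟩ => le_pure_iff.2 ?_
  have hne : ∀ᶠ s in 𝓝[≠] t, f s ≠ c :=
    (differentiableAt_of_deriv_ne_zero ht).hasDerivAt.eventually_ne ht
  rw [eventually_nhdsWithin_iff] at hne
  filter_upwards [nhdsWithin_le_nhds hne, self_mem_nhdsWithin] with s hs hsZ
  by_contra hst
  exact hs hst hsZ.1

theorem countable_setOf_eq_and_deriv_ne_zero {F : Type*} [NormedAddCommGroup F]
    [NormedSpace ℝ F] (f : ℝ → F) (c : F) :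
    {t | f t = c ∧ deriv f t ≠ 0}.Countable :=
  (HereditarilyLindelofSpace.isLindelof _).countable_of_isDiscrete
    (isDiscrete_setOf_eq_and_deriv_ne_zero f c)

theorem abs_deriv_abs_comp {f : ℝ → ℝ} {t : ℝ} (hf : ContinuousAt f t)
    (h0 : f t = 0 → deriv f t = 0) :
    |deriv (fun s => |f s|) t| = |deriv f t| := by
  rcases lt_trichotomy (f t) 0 with hneg | hzero | hpos
  · have hev : (fun s => |f s|) =ᶠ[𝓝 t] fun s => -f s := by
      filter_upwards [hf.eventually (Iio_mem_nhds hneg)] with s hs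
      exact abs_of_neg hs
    rw [hev.deriv_eq, deriv.fun_neg, abs_neg]
  · have hmin : IsLocalMin (fun s => |f s|) t :=
      .of_forall fun s => by simp only [hzero, abs_zero, abs_nonneg]
    rw [hmin.deriv_eq_zero, h0 hzero]
  · have hev : (fun s => |f s|) =ᶠ[𝓝 t] f := by
      filter_upwards [hf.eventually (Ioi_mem_nhds hpos)] with s hs
      exact abs_of_pos hs
    rw [hev.deriv_eq]

section Piecewise

variable {F : Type*} [NormedAddCommGroup F] [NormedSpace ℝ F] {f g : ℝ → F} {a t : ℝ}

theorem deriv_ite_le_of_lt (h : t < a) :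
    deriv (fun s => if s ≤ a then f s else g s) t = deriv f t := by
  refine EventuallyEq.deriv_eq ?_
  filter_upwards [Iio_mem_nhds h] with s hs
  exact if_pos (le_of_lt hs)

theorem deriv_ite_le_of_gt (h : a < t) :
    deriv (fun s => if s ≤ a then f s else g s) t = deriv g t := by
  refine EventuallyEq.deriv_eq ?_
  filter_upwards [Ioi_mem_nhds h] with s hs
  exact if_neg (not_le.2 hs)

end Piecewise

theorem stmt7_general (T tstar δ : ℝ) (x : ℝ → ℝ)
    (hcont : ContinuousOn x (Icc 0 T))
    (hδ : 0 ≤ δ)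
    (hattain : x tstar = δ) :
    ContinuousOn (fun t => if t ≤ tstar then -|x t| else x t - 2 * δ) (Icc 0 T) ∧
    (∀ t ∈ Icc (0:ℝ) tstar, (if t ≤ tstar then -|x t| else x t - 2 * δ) ≤ 0) ∧
    (∀ᵐ t ∂(volume.restrict (Icc (0:ℝ) T)),
      |deriv (fun s => if s ≤ tstar then -|x s| else x s - 2 * δ) t| = |deriv x t|) ∧
    (∀ t ∈ Icc (0:ℝ) T, (if t ≤ tstar then -|x t| else x t - 2 * δ) ≤ x t) := by
  refine ⟨?_, fun t ht => by simp [ht.2], ?_, fun t _ => ?_⟩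
  · refine ContinuousOn.ite_le ((hcont.mono inter_subset_left).abs.neg)
      ((hcont.mono inter_subset_left).sub continuousOn_const) fun _ => ?_
    rw [hattain, abs_of_nonneg hδ]
    ring
  · have hIoo : ∀ᵐ t ∂volume.restrict (Icc (0:ℝ) T), t ∈ Ioo 0 T := by
      rw [← Measure.restrict_congr_set Ioo_ae_eq_Icc]
      exact ae_restrict_mem measurableSet_Ioo
    have hgood : ∀ᵐ t ∂volume.restrict (Icc (0:ℝ) T),
        t ∉ insert tstar {t | x t = 0 ∧ deriv x t ≠ 0} :=
      ae_restrict_of_ae (((countable_setOf_eq_and_deriv_ne_zero x 0).insert tstar).ae_notMem _)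
    filter_upwards [hIoo, hgood] with t ht htZ
    rcases lt_or_gt_of_ne (ne_of_mem_of_not_mem (mem_insert tstar _) htZ).symm with hlt | hgt
    · rw [deriv_ite_le_of_lt hlt, deriv.fun_neg, abs_neg]
      exact abs_deriv_abs_comp (hcont.continuousAt (Icc_mem_nhds ht.1 ht.2))
        fun h0 => not_not.1 fun hne => htZ (mem_insert_of_mem _ ⟨h0, hne⟩)
    · rw [deriv_ite_le_of_gt hgt, deriv_sub_const]
  · split_ifs
    · exact neg_abs_le _
    · linarith

/-- The reflection-and-shift deformation of Lemma 2.5: reflecting the positive part of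
`x` on `[0,t*]` and shifting by `-2δ` afterwards yields a function in `H¹` which is
nonpositive on `[0,t*]`, has the same speed a.e., and lies below `x`. -/
theorem stmt7 (T tstar δ : ℝ) (hT : 0 < T) (x : ℝ → ℝ)
    (hcont : ContinuousOn x (Icc 0 T))
    (hx0 : x 0 = 0)
    (hts : tstar ∈ Icc (0:ℝ) T)
    (hδ : 0 ≤ δ)
    (hmax : ∀ t ∈ Icc (0:ℝ) tstar, x t ≤ δ)
    (hattain : x tstar = δ) :
    ContinuousOn (fun t => if t ≤ tstar then -|x t| else x t - 2 * δ) (Icc 0 T) ∧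
    (∀ t ∈ Icc (0:ℝ) tstar, (if t ≤ tstar then -|x t| else x t - 2 * δ) ≤ 0) ∧
    (∀ᵐ t ∂(volume.restrict (Icc (0:ℝ) T)),
      |deriv (fun s => if s ≤ tstar then -|x s| else x s - 2 * δ) t| = |deriv x t|) ∧
    (∀ t ∈ Icc (0:ℝ) T, (if t ≤ tstar then -|x t| else x t - 2 * δ) ≤ x t) :=
  stmt7_general T tstar δ x hcont hδ hattain
end

section
/- Suppose $r(t) = C_1 t^{2/3} + o(t^{2/3})$ with $C_1 > 0$, $\phi(t) \to \phi^+ \in \{0,\pi\}$, $\dot r(t) = C_2 t^{-1/3} + o(t^{-1/3})$, $\dot\phi(t) \to 0$, and $\dot\theta(t) \to 0$ as $t \to 0^+$, and $\theta(t) \to \theta^+$. Then the $x$-component $\mathfrak{x}(t) = r(t)\sin\phi(t)\cos\theta(t)$ satisfies $\dot{\mathfrak{x}}(t) = \dot r \sin\phi\cos\theta + r\dot\phi\cos\phi\cos\theta - r\dot\theta\sin\phi\sin\theta = O(t^{2/3})$ as $t \to 0^+$, i.e. there is $C > 0$ with $|\dot{\mathfrak{x}}(t)| \le C t^{2/3}$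 for small $t > 0$. -/
open Real Filter Topology Set

/-- The key asymptotic estimate (2.6): when a binary collision is approached along the
vertical direction (`φ⁺ ∈ {0, π}`), Sundman's estimates imply that the horizontal
velocity `𝔵̇ = ṙ sin φ cos θ + r φ̇ cos φ cos θ - r θ̇ sin φ sin θ` is `O(t^{2/3})`
as `t → 0⁺`. -/
theorem stmt8 (C1 C2 phiplus thetaplus : ℝ) (hC1 : 0 < C1)
    (hphiplus : phiplus = 0 ∨ phiplus = π)
    (r phi theta r' phi' theta' : ℝ → ℝ)
    (hderiv : ∀ t ∈ Ioi (0:ℝ),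
      HasDerivAt r (r' t) t ∧ HasDerivAt phi (phi' t) t ∧ HasDerivAt theta (theta' t) t)
    (hr : Tendsto (fun t => r t / t ^ ((2:ℝ)/3)) (𝓝[>] 0) (𝓝 C1))
    (hr' : Tendsto (fun t => r' t * t ^ ((1:ℝ)/3)) (𝓝[>] 0) (𝓝 C2))
    (hphi : Tendsto phi (𝓝[>] 0) (𝓝 phiplus))
    (hphi' : Tendsto phi' (𝓝[>] 0) (𝓝 0))
    (htheta : Tendsto theta (𝓝[>] 0) (𝓝 thetaplus))
    (htheta' : Tendsto theta' (𝓝[>] 0) (𝓝 0)) :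
    ∃ C > 0, ∀ᶠ t in 𝓝[>] (0:ℝ),
      |r' t * sin (phi t) * cos (theta t)
        + r t * phi' t * cos (phi t) * cos (theta t)
        - r t * theta' t * sin (phi t) * sin (theta t)| ≤ C * t ^ ((2:ℝ)/3) := by
  refine ⟨(|C2| + 1) + 2 * (C1 + 1), by positivity, ?_⟩
  -- eventual bounds from the limits
  have h1 : ∀ᶠ t in 𝓝[>] (0:ℝ), |r' t * t ^ ((1:ℝ)/3)| ≤ |C2| + 1 :=
    (hr'.abs.eventually_lt_const (lt_add_one _)).mono fun t ht => ht.le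
  have h2 : ∀ᶠ t in 𝓝[>] (0:ℝ), |r t / t ^ ((2:ℝ)/3)| ≤ C1 + 1 := by
    have : |C1| < C1 + 1 := by rw [abs_of_pos hC1]; exact lt_add_one _
    exact (hr.abs.eventually_lt_const this).mono fun t ht => ht.le
  have h3 : ∀ᶠ t in 𝓝[>] (0:ℝ), |phi' t| ≤ 1 := by
    have := hphi'.abs.eventually_lt_const (by norm_num : |(0:ℝ)| < 1)
    exact this.mono fun t ht => ht.le
  have h4 : ∀ᶠ t in 𝓝[>] (0:ℝ), |theta' t| ≤ 1 := by
    have := htheta'.abs.eventually_lt_const (by norm_num : |(0:ℝ)| < 1)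
    exact this.mono fun t ht => ht.le
  -- |sin (phi t)| ≤ t eventually
  have hsin : ∀ᶠ t in 𝓝[>] (0:ℝ), |sin (phi t)| ≤ t := by
    rw [eventually_nhdsWithin_iff] at h3 ⊢
    rw [Metric.eventually_nhds_iff] at h3
    obtain ⟨δ, hδpos, hδ⟩ := h3
    rw [Metric.eventually_nhds_iff]
    refine ⟨δ, hδpos, fun t htδ ht => ?_⟩
    have ht0 : (0:ℝ) < t := ht
    -- first: |phi t - phiplus| ≤ t
    have key : |phi t - phiplus| ≤ t := by
      have hlim : Tendsto (fun s => |phi t - phi s|) (𝓝[>] (0:ℝ)) (𝓝 |phi t - phiplus|) :=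
        ((tendsto_const_nhds.sub hphi).abs)
      refine le_of_tendsto hlim ?_
      filter_upwards [Ioo_mem_nhdsGT_of_mem ⟨le_refl (0:ℝ), ht0⟩] with s hs
      obtain ⟨hs0, hst⟩ := hs
      have hsub : Icc s t ⊆ Ioi (0:ℝ) := fun x hx => lt_of_lt_of_le hs0 hx.1
      have hb : ∀ x ∈ Icc s t, ‖phi' x‖ ≤ 1 := by
        intro x hx
        refine hδ ?_ (hsub hx)
        rw [Real.dist_eq, sub_zero, abs_of_pos (hsub hx)]
        calc x ≤ t := hx.2
        _ < δ := by
            have := htδ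
            rwa [Real.dist_eq, sub_zero, abs_of_pos ht0] at this
      have := (convex_Icc s t).norm_image_sub_le_of_norm_hasDerivWithin_le
        (fun x hx => ((hderiv x (hsub hx)).2.1).hasDerivWithinAt) hb
        (left_mem_Icc.2 hst.le) (right_mem_Icc.2 hst.le)
      calc |phi t - phi s| = ‖phi t - phi s‖ := rfl
        _ ≤ 1 * ‖t - s‖ := this
        _ = |t - s| := by rw [one_mul]; rfl
        _ ≤ t := by rw [abs_of_nonneg (by linarith)]; linarith
    -- then: |sin (phi t)| ≤ |phi t - phiplus|
    rcases hphiplus with h | h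
    · calc |sin (phi t)| ≤ |phi t| := abs_sin_le_abs
        _ = |phi t - phiplus| := by rw [h, sub_zero]
        _ ≤ t := key
    · calc |sin (phi t)| = |sin (phi t - π)| := by rw [Real.sin_sub_pi, abs_neg]
        _ ≤ |phi t - π| := abs_sin_le_abs
        _ = |phi t - phiplus| := by rw [h]
        _ ≤ t := key
  filter_upwards [h1, h2, h3, h4, hsin, self_mem_nhdsWithin] with t h1 h2 h3 h4 hsin ht
  have ht0 : (0:ℝ) < t := ht
  have ht13 : (0:ℝ) < t ^ ((1:ℝ)/3) := Real.rpow_pos_of_pos ht0 _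
  have ht23 : (0:ℝ) < t ^ ((2:ℝ)/3) := Real.rpow_pos_of_pos ht0 _
  -- |r' t| ≤ (|C2|+1) / t^(1/3)
  have hr'b : |r' t| ≤ (|C2| + 1) / t ^ ((1:ℝ)/3) := by
    rw [le_div_iff₀ ht13]
    calc |r' t| * t ^ ((1:ℝ)/3) = |r' t * t ^ ((1:ℝ)/3)| := by
          rw [abs_mul, abs_of_pos ht13]
      _ ≤ |C2| + 1 := h1
  have hrb : |r t| ≤ (C1 + 1) * t ^ ((2:ℝ)/3) := by
    rw [← div_le_iff₀ ht23]
    calc |r t| / t ^ ((2:ℝ)/3) = |r t / t ^ ((2:ℝ)/3)| := by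
          rw [abs_div, abs_of_pos ht23]
      _ ≤ C1 + 1 := h2
  have hpow : t / t ^ ((1:ℝ)/3) = t ^ ((2:ℝ)/3) := by
    rw [div_eq_iff (ne_of_gt ht13), ← Real.rpow_add ht0]
    norm_num
  have hcos1 : |cos (theta t)| ≤ 1 := abs_cos_le_one _
  have hcos2 : |cos (phi t)| ≤ 1 := abs_cos_le_one _
  have hsinth : |sin (theta t)| ≤ 1 := abs_sin_le_one _
  have hsin1 : |sin (phi t)| ≤ 1 := abs_sin_le_one _
  set A := r' t * sin (phi t) * cos (theta t) with hA
  set B := r t * phi' t * cos (phi t) * cos (theta t) with hB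
  set D := r t * theta' t * sin (phi t) * sin (theta t) with hD
  have habs : |A + B - D| ≤ |A| + |B| + |D| := by
    calc |A + B - D| ≤ |A + B| + |D| := abs_sub _ _
      _ ≤ |A| + |B| + |D| := by gcongr; exact abs_add_le _ _
  have tA : |A| ≤ (|C2| + 1) * t ^ ((2:ℝ)/3) := by
    rw [hA, abs_mul, abs_mul]
    calc |r' t| * |sin (phi t)| * |cos (theta t)|
        ≤ |r' t| * |sin (phi t)| * 1 := by
          gcongr
      _ = |r' t| * |sin (phi t)| := mul_one _
      _ ≤ ((|C2| + 1) / t ^ ((1:ℝ)/3)) * t :=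
          mul_le_mul hr'b hsin (abs_nonneg _) (by positivity)
      _ = (|C2| + 1) * (t / t ^ ((1:ℝ)/3)) := by ring
      _ = (|C2| + 1) * t ^ ((2:ℝ)/3) := by rw [hpow]
  have tB : |B| ≤ (C1 + 1) * t ^ ((2:ℝ)/3) := by
    rw [hB, abs_mul, abs_mul, abs_mul]
    calc |r t| * |phi' t| * |cos (phi t)| * |cos (theta t)|
        ≤ ((C1 + 1) * t ^ ((2:ℝ)/3)) * 1 * 1 * 1 := by
          gcongr <;> positivity
      _ = (C1 + 1) * t ^ ((2:ℝ)/3) := by ring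
  have tD : |D| ≤ (C1 + 1) * t ^ ((2:ℝ)/3) := by
    rw [hD, abs_mul, abs_mul, abs_mul]
    calc |r t| * |theta' t| * |sin (phi t)| * |sin (theta t)|
        ≤ ((C1 + 1) * t ^ ((2:ℝ)/3)) * 1 * 1 * 1 := by
          gcongr <;> positivity
      _ = (C1 + 1) * t ^ ((2:ℝ)/3) := by ring
  calc |A + B - D| ≤ |A| + |B| + |D| := habs
    _ ≤ (|C2| + 1) * t ^ ((2:ℝ)/3) + (C1 + 1) * t ^ ((2:ℝ)/3) + (C1 + 1) * t ^ ((2:ℝ)/3) := by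
        linarith
    _ = ((|C2| + 1) + 2 * (C1 + 1)) * t ^ ((2:ℝ)/3) := by ring
end

section
/- Let $u, v : [0,T] \to \mathbb{R}^3$ be continuous with $u(t) \ne v(t)$ for all $t \in [T-\delta, T]$ for some $\delta \in (0,T)$, and suppose the first coordinates satisfy $v_1(t) - u_1(t) \ge C_3 > 0$ and $|u(t)-v(t)|^{-1} \ge C_4 > 0$ on $[T-\delta,T]$. For $\epsilon > 0$ define $u^\epsilon(t) = u(t) - \epsilon^2 e_1$ and $v^\epsilon(t) = v(t) + \epsilon^2 e_1$ for $t \in [T-\delta,T]$. Then there exists $C_5 > 0$ such that for all sufficiently small $\epsilon > 0$ and all $t \in [T-\delta,T]$, $|v^\epsilon(t) - u^\epsilon(t)|^{-1} - |v(t)-u(t)|^{-1} \le -C_5\epsilon^2$. -/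
/-!
Write `w = v t - u t` and `e = e₁`. The perturbed difference is `w + 2ε² e`, and since
`⟪w, e⟫ = v₁ - u₁ ≥ C₃` its squared length exceeds `‖w‖²` by at least `4ε²C₃`. As
`1/a - 1/b = (b² - a²) / (a b (a + b))`, and all lengths involved stay below
`M = C₄⁻¹ + 2` once `ε < 1`, the reciprocal distance drops by at least `2 C₃ ε² / M³`.
-/

open Set

lemma sq_norm_add_le_sq_norm_add_smul {E : Type*} [NormedAddCommGroup E]
    [InnerProductSpace ℝ E] {w e : E} {s c : ℝ} (hs : 0 ≤ s) (hc : c ≤ inner ℝ w e) :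
    ‖w‖ ^ 2 + 2 * s * c ≤ ‖w + s • e‖ ^ 2 := by
  rw [norm_add_sq_real, real_inner_smul_right, norm_smul]
  nlinarith [mul_le_mul_of_nonneg_left hc hs, sq_nonneg (‖s‖ * ‖e‖)]

lemma inv_sub_inv_le_of_sq_add_le {a b k M : ℝ} (ha : 0 < a) (hb : 0 ≤ b) (hk : 0 ≤ k)
    (hbM : b ≤ M) (hsq : a ^ 2 + k ≤ b ^ 2) :
    b⁻¹ - a⁻¹ ≤ -(k / (2 * M ^ 3)) := by
  have hab : a ≤ b := (pow_le_pow_iff_left₀ ha.le hb two_ne_zero).1 (by linarith)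
  have hb' : 0 < b := ha.trans_le hab
  have hdenom : a * b * (a + b) ≤ 2 * M ^ 3 := by
    have h1 : a * b ≤ M * M := mul_le_mul (hab.trans hbM) hbM hb (hb.trans hbM)
    nlinarith [mul_le_mul h1 (by linarith : a + b ≤ 2 * M) (by linarith) (by nlinarith)]
  have key : b⁻¹ - a⁻¹ = -((b ^ 2 - a ^ 2) / (a * b * (a + b))) := by
    field_simp
    ring
  rw [key, neg_le_neg_iff]
  calc k / (2 * M ^ 3) ≤ k / (a * b * (a + b)) := by gcongr
    _ ≤ (b ^ 2 - a ^ 2) / (a * b * (a + b)) := by gcongr; linarith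

theorem stmt9_general (T δ C3 C4 : ℝ) (hC3 : 0 < C3) (hC4 : 0 < C4)
    (u v : ℝ → EuclideanSpace ℝ (Fin 3))
    (hsep : ∀ t ∈ Icc (T - δ) T, C3 ≤ v t 0 - u t 0)
    (hinv : ∀ t ∈ Icc (T - δ) T, C4 ≤ ‖u t - v t‖⁻¹) :
    ∃ C5 > 0, ∃ ε0 > 0, ∀ ε ∈ Ioo (0:ℝ) ε0, ∀ t ∈ Icc (T - δ) T,
      ‖(v t + ε ^ 2 • (EuclideanSpace.single 0 1 : EuclideanSpace ℝ (Fin 3)))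
        - (u t - ε ^ 2 • (EuclideanSpace.single 0 1 : EuclideanSpace ℝ (Fin 3)))‖⁻¹
        - ‖v t - u t‖⁻¹ ≤ -C5 * ε ^ 2 := by
  set M := C4⁻¹ + 2
  refine ⟨2 * C3 / M ^ 3, by positivity, 1, one_pos, fun ε ⟨hε0, hε1⟩ t ht => ?_⟩
  set e : EuclideanSpace ℝ (Fin 3) := EuclideanSpace.single 0 1
  set w := v t - u t
  have hinv_w : C4 ≤ ‖w‖⁻¹ := norm_sub_rev (u t) (v t) ▸ hinv t ht
  have hw_pos : 0 < ‖w‖ := inv_pos.1 (hC4.trans_le hinv_w)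
  have hw_le : ‖w‖ ≤ C4⁻¹ := (le_inv_comm₀ hC4 hw_pos).1 hinv_w
  have hwe : C3 ≤ inner ℝ w e := by
    simpa [e, w, EuclideanSpace.inner_single_right] using hsep t ht
  have hdiff : (v t + ε ^ 2 • e) - (u t - ε ^ 2 • e) = w + (2 * ε ^ 2) • e := by
    simp only [w]; module
  have hbM : ‖w + (2 * ε ^ 2) • e‖ ≤ M := by
    have he : ‖(2 * ε ^ 2) • e‖ = 2 * ε ^ 2 := by simp [e, norm_smul]
    have hε2 : ε ^ 2 ≤ 1 := pow_le_one₀ hε0.le hε1.le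
    linarith [norm_add_le w ((2 * ε ^ 2) • e)]
  have hsq := sq_norm_add_le_sq_norm_add_smul (by positivity : (0:ℝ) ≤ 2 * ε ^ 2) hwe
  rw [hdiff]
  convert inv_sub_inv_le_of_sq_add_le hw_pos (norm_nonneg _) (by positivity) hbM hsq using 1
  field_simp

/-- Potential-energy decrease: pushing two separated bodies apart by `ε²` along the
first coordinate direction decreases the reciprocal distance by at least `C₅ ε²`. -/
theorem stmt9 (T δ C3 C4 : ℝ) (hδ : δ ∈ Ioo (0:ℝ) T) (hC3 : 0 < C3) (hC4 : 0 < C4)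
    (u v : ℝ → EuclideanSpace ℝ (Fin 3))
    (hucont : ContinuousOn u (Icc (T - δ) T)) (hvcont : ContinuousOn v (Icc (T - δ) T))
    (hne : ∀ t ∈ Icc (T - δ) T, u t ≠ v t)
    (hsep : ∀ t ∈ Icc (T - δ) T, C3 ≤ v t 0 - u t 0)
    (hinv : ∀ t ∈ Icc (T - δ) T, C4 ≤ ‖u t - v t‖⁻¹) :
    ∃ C5 > 0, ∃ ε0 > 0, ∀ ε ∈ Ioo (0:ℝ) ε0, ∀ t ∈ Icc (T - δ) T,
      ‖(v t + ε ^ 2 • (EuclideanSpace.single 0 1 : EuclideanSpace ℝ (Fin 3)))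
        - (u t - ε ^ 2 • (EuclideanSpace.single 0 1 : EuclideanSpace ℝ (Fin 3)))‖⁻¹
        - ‖v t - u t‖⁻¹ ≤ -C5 * ε ^ 2 :=
  stmt9_general T δ C3 C4 hC3 hC4 u v hsep hinv
end

section
/- With the deformation $q^{\epsilon_2}_j(t) = q_j(t) - t(2\epsilon_2 - t)e_1$, $q^{\epsilon_2}_k(t) = q_k(t) + t(2\epsilon_2-t)e_1$ for $t \in [0,\epsilon_2]$ (constant shifts $\mp\epsilon_2^2 e_1$ on $[\epsilon_2,T]$), and assuming $|\dot x_j(t)|, |\dot x_k(t)| \le C_1 t^{2/3}$ as $t \to 0^+$, the kinetic-energy increment satisfies $\int_0^T K(\dot q^{\epsilon_2}) - K(\dot q)\,dt \le C_2\,\epsilon_2^{8/3}$ for some constant $C_2$ depending only on $m_j + m_k$ and $C_1$, for all sufficiently small $\epsilon_2 > 0$. -/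
/-!
On `[0, ε]` the deformation adds `∓ c e₁` to the velocities with `c = 2(ε - t) ≤ 2ε`, so the
kinetic increment of each body is `½ m (c² ∓ 2 c ẋ)`. The Sundman bound makes `|ẋ| ≤ C₁ ε^{2/3}`
there, hence the increment is `O(ε² + ε · ε^{2/3})` pointwise, and integrating over an interval
of length `ε` gives `O(ε³ + ε^{8/3}) = O(ε^{8/3})`.
-/

open MeasureTheory Set RealInnerProductSpace

theorem abs_sq_sub_two_mul_mul_le {c x B : ℝ} (hc : 0 ≤ c) (hx : |x| ≤ B) :
    |c ^ 2 - 2 * c * x| ≤ c ^ 2 + 2 * c * B :=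
  calc |c ^ 2 - 2 * c * x| ≤ |c ^ 2| + |2 * c * x| := abs_sub _ _
    _ = c ^ 2 + 2 * c * |x| := by rw [abs_mul, abs_mul, abs_two, abs_of_nonneg hc, abs_sq]
    _ ≤ c ^ 2 + 2 * c * B := by gcongr

section SingleDeformation

variable {ι : Type*} [Fintype ι] [DecidableEq ι]

theorem EuclideanSpace.norm_sub_smul_single_sq (v : EuclideanSpace ℝ ι) (i : ι) (c : ℝ) :
    ‖v - c • EuclideanSpace.single i (1 : ℝ)‖ ^ 2 = ‖v‖ ^ 2 - 2 * c * v i + c ^ 2 := by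
  have h_inner : ⟪v, c • EuclideanSpace.single i (1 : ℝ)⟫ = c * v i := by
    simp [real_inner_smul_right, EuclideanSpace.inner_single_right]
  have h_norm : ‖c • EuclideanSpace.single i (1 : ℝ)‖ ^ 2 = c ^ 2 := by
    simp [norm_smul, sq_abs]
  rw [norm_sub_sq_real, h_inner, h_norm]
  ring

theorem EuclideanSpace.norm_add_smul_single_sq (v : EuclideanSpace ℝ ι) (i : ι) (c : ℝ) :
    ‖v + c • EuclideanSpace.single i (1 : ℝ)‖ ^ 2 = ‖v‖ ^ 2 + 2 * c * v i + c ^ 2 := by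
  rw [← sub_neg_eq_add, ← neg_smul, EuclideanSpace.norm_sub_smul_single_sq]
  ring

theorem abs_kineticIncrement_le {mj mk c B : ℝ}
    (hmj : 0 ≤ mj) (hmk : 0 ≤ mk) (hc : 0 ≤ c) (i : ι) {vj vk : EuclideanSpace ℝ ι}
    (hj : |vj i| ≤ B) (hk : |vk i| ≤ B) :
    |(1/2) * mj * (‖vj - c • EuclideanSpace.single i (1 : ℝ)‖ ^ 2 - ‖vj‖ ^ 2)
      + (1/2) * mk * (‖vk + c • EuclideanSpace.single i (1 : ℝ)‖ ^ 2 - ‖vk‖ ^ 2)|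
      ≤ (1/2) * (mj + mk) * (c ^ 2 + 2 * c * B) := by
  rw [EuclideanSpace.norm_sub_smul_single_sq, EuclideanSpace.norm_add_smul_single_sq]
  have hj' := abs_sq_sub_two_mul_mul_le hc hj
  have hk' := abs_sq_sub_two_mul_mul_le hc ((abs_neg (vk i)).trans_le hk)
  calc _ = |(1/2) * mj * (c ^ 2 - 2 * c * vj i) + (1/2) * mk * (c ^ 2 - 2 * c * -vk i)| := by
        ring_nf
    _ ≤ (1/2) * mj * |c ^ 2 - 2 * c * vj i| + (1/2) * mk * |c ^ 2 - 2 * c * -vk i| := by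
        refine (abs_add_le _ _).trans_eq ?_
        rw [abs_mul (1/2 * mj), abs_mul (1/2 * mk),
          abs_of_nonneg (by positivity : (0:ℝ) ≤ 1/2 * mj),
          abs_of_nonneg (by positivity : (0:ℝ) ≤ 1/2 * mk)]
    _ ≤ (1/2) * (mj + mk) * (c ^ 2 + 2 * c * B) := by
        nlinarith [mul_le_mul_of_nonneg_left hj' hmj, mul_le_mul_of_nonneg_left hk' hmk]

end SingleDeformation

theorem sundmanBound_mul_le_rpow_eight_thirds {m C ε : ℝ} (hm : 0 ≤ m) (hε : 0 < ε)
    (hε1 : ε ≤ 1) :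
    (1/2) * m * ((2 * ε) ^ 2 + 2 * (2 * ε) * (C * ε ^ ((2:ℝ)/3))) * ε
      ≤ 2 * m * (1 + C) * ε ^ ((8:ℝ)/3) := by
  have h_cube : ε ^ 2 * ε ≤ ε ^ ((8:ℝ)/3) := by
    rw [← pow_succ, ← Real.rpow_natCast]
    exact Real.rpow_le_rpow_of_exponent_ge hε hε1 (by norm_num)
  have h_eight_thirds : ε * ε ^ ((2:ℝ)/3) * ε = ε ^ ((8:ℝ)/3) := by
    rw [show (8:ℝ)/3 = 1 + 2/3 + 1 by norm_num, Real.rpow_add hε, Real.rpow_add hε,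
      Real.rpow_one]
  calc _ = 2 * m * (ε ^ 2 * ε) + 2 * m * C * (ε * ε ^ ((2:ℝ)/3) * ε) := by ring
    _ ≤ 2 * m * ε ^ ((8:ℝ)/3) + 2 * m * C * ε ^ ((8:ℝ)/3) := by
        rw [h_eight_thirds]; gcongr
    _ = 2 * m * (1 + C) * ε ^ ((8:ℝ)/3) := by ring

theorem stmt10_general (mj mk C1 t1 : ℝ) (hmj : 0 < mj) (hmk : 0 < mk)
    (hC1 : 0 < C1) (ht1 : 0 < t1)
    (dqj dqk : ℝ → EuclideanSpace ℝ (Fin 3))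
    (hbdj : ∀ t ∈ Ioc (0:ℝ) t1, |dqj t 0| ≤ C1 * t ^ ((2:ℝ)/3))
    (hbdk : ∀ t ∈ Ioc (0:ℝ) t1, |dqk t 0| ≤ C1 * t ^ ((2:ℝ)/3)) :
    ∃ C2 > 0, ∃ ε0 > 0, ∀ ε ∈ Ioo (0:ℝ) ε0,
      (∫ t in (0:ℝ)..ε,
        ((1/2) * mj * (‖dqj t - (2 * (ε - t)) •
            (EuclideanSpace.single 0 1 : EuclideanSpace ℝ (Fin 3))‖ ^ 2 - ‖dqj t‖ ^ 2)
        + (1/2) * mk * (‖dqk t + (2 * (ε - t)) •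
            (EuclideanSpace.single 0 1 : EuclideanSpace ℝ (Fin 3))‖ ^ 2 - ‖dqk t‖ ^ 2)))
      ≤ C2 * ε ^ ((8:ℝ)/3) := by
  refine ⟨2 * (mj + mk) * (1 + C1), by positivity, min t1 1, by positivity, ?_⟩
  rintro ε ⟨hε, hε_lt⟩
  have h_sundman {x : ℝ → ℝ} (hx : ∀ t ∈ Ioc (0:ℝ) t1, |x t| ≤ C1 * t ^ ((2:ℝ)/3))
      {t : ℝ} (ht : t ∈ Ioc 0 ε) : |x t| ≤ C1 * ε ^ ((2:ℝ)/3) :=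
    (hx t ⟨ht.1, ht.2.trans (hε_lt.le.trans (min_le_left _ _))⟩).trans (by
      gcongr; exacts [ht.1.le, ht.2])
  have h_pointwise : ∀ t ∈ uIoc 0 ε, ‖(1/2) * mj * (‖dqj t - (2 * (ε - t)) •
            (EuclideanSpace.single 0 1 : EuclideanSpace ℝ (Fin 3))‖ ^ 2 - ‖dqj t‖ ^ 2)
        + (1/2) * mk * (‖dqk t + (2 * (ε - t)) •
            (EuclideanSpace.single 0 1 : EuclideanSpace ℝ (Fin 3))‖ ^ 2 - ‖dqk t‖ ^ 2)‖
      ≤ (1/2) * (mj + mk) * ((2 * ε) ^ 2 + 2 * (2 * ε) * (C1 * ε ^ ((2:ℝ)/3))) := by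
    intro t ht
    rw [uIoc_of_le hε.le] at ht
    refine (abs_kineticIncrement_le hmj.le hmk.le (by linarith [ht.2]) 0
      (h_sundman (x := fun t => dqj t 0) hbdj ht)
      (h_sundman (x := fun t => dqk t 0) hbdk ht)).trans ?_
    gcongr <;> linarith [ht.1, ht.2]
  -- the bound on the norm needs no integrability: a non-integrable integral is `0`
  calc _ ≤ ‖_‖ := le_abs_self _
    _ ≤ _ := intervalIntegral.norm_integral_le_of_norm_le_const h_pointwise
    _ ≤ _ := by
      rw [sub_zero, abs_of_pos hε]
      exact sundmanBound_mul_le_rpow_eight_thirds (by positivity) hε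
        (hε_lt.le.trans (min_le_right _ _))

/-- Kinetic-energy increment of the deformation in Lemma 2.7: deforming the colliding
bodies by `∓ t(2ε₂ - t)e₁` on `[0,ε₂]` increases the kinetic part of the action by at
most `C₂ ε₂^{8/3}`, given the Sundman bound `|ẋⱼ|, |ẋₖ| ≤ C₁ t^{2/3}` near `t = 0⁺`. -/
theorem stmt10 (T mj mk C1 t1 : ℝ) (hT : 0 < T) (hmj : 0 < mj) (hmk : 0 < mk)
    (hC1 : 0 < C1) (ht1 : 0 < t1)
    (dqj dqk : ℝ → EuclideanSpace ℝ (Fin 3))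
    (hmeasj : Measurable dqj) (hmeask : Measurable dqk)
    (hbdj : ∀ t ∈ Ioc (0:ℝ) t1, |dqj t 0| ≤ C1 * t ^ ((2:ℝ)/3))
    (hbdk : ∀ t ∈ Ioc (0:ℝ) t1, |dqk t 0| ≤ C1 * t ^ ((2:ℝ)/3)) :
    ∃ C2 > 0, ∃ ε0 > 0, ∀ ε ∈ Ioo (0:ℝ) ε0,
      (∫ t in (0:ℝ)..ε,
        ((1/2) * mj * (‖dqj t - (2 * (ε - t)) •
            (EuclideanSpace.single 0 1 : EuclideanSpace ℝ (Fin 3))‖ ^ 2 - ‖dqj t‖ ^ 2)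
        + (1/2) * mk * (‖dqk t + (2 * (ε - t)) •
            (EuclideanSpace.single 0 1 : EuclideanSpace ℝ (Fin 3))‖ ^ 2 - ‖dqk t‖ ^ 2)))
      ≤ C2 * ε ^ ((8:ℝ)/3) :=
  stmt10_general mj mk C1 t1 hmj hmk hC1 ht1 dqj dqk hbdj hbdk
end

section
/- Let $g : [0,T] \to \mathbb{R}^3$ be twice differentiable at $0$ with $g(0) = 0$, and let $x_j, x_k : [0,T] \to \mathbb{R}$ be continuous functions with $x_j(t) \le x_j(0) = x_k(0) \le x_k(t)$ for all $t \in [0,T]$. Suppose $x_j(t) = \mathfrak{x}_j(t) + g_1(t)$ and $x_k(t) = \mathfrak{x}_k(t) + g_1(t)$, where $g_1$ denotes the first coordinate of $g$ and $\mathfrak{x}_j, \mathfrak{x}_k$ satisfy $\mathfrak{x}_i(0)=0$ and $|\dot{\mathfrak{x}}_i(t)| \le Ct^{2/3}$ as $t \to 0^+$ for $i \in \{j,k\}$. Then $\dot g_1(0) = 0$. -/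
open Set

lemma aux17 (C δ : ℝ) (hC : 0 ≤ C) (hδ : 0 < δ) (f f' : ℝ → ℝ)
    (hcont : ContinuousOn f (Icc 0 δ)) (hf0 : f 0 = 0)
    (hder : ∀ t ∈ Ioc (0:ℝ) δ, HasDerivAt f (f' t) t)
    (hbd : ∀ t ∈ Ioc (0:ℝ) δ, |f' t| ≤ C * δ ^ ((2:ℝ)/3)) :
    |f δ| ≤ C * δ ^ ((2:ℝ)/3) * δ := by
  set K := C * δ ^ ((2:ℝ)/3) with hK
  have hK0 : 0 ≤ K := by positivity
  have hint : interior (Icc (0:ℝ) δ) = Ioo 0 δ := interior_Icc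
  have key : ∀ (ε : ℝ), ε = 1 ∨ ε = -1 → ε * f δ ≤ K * δ := by
    intro ε hε
    have habs : |ε| = 1 := by rcases hε with h | h <;> simp [h]
    have hmono : MonotoneOn (fun t => K * t - ε * f t) (Icc 0 δ) := by
      apply monotoneOn_of_deriv_nonneg (convex_Icc 0 δ)
      · exact (continuousOn_const.mul continuousOn_id).sub
          (continuousOn_const.mul hcont)
      · intro x hx
        rw [hint] at hx
        exact (((hasDerivAt_id x).const_mul K).sub
          ((hder x ⟨hx.1, hx.2.le⟩).const_mul ε)).differentiableAt.differentiableWithinAt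
      · intro x hx
        rw [hint] at hx
        have hx' : x ∈ Ioc (0:ℝ) δ := ⟨hx.1, hx.2.le⟩
        have hd := (((hasDerivAt_id x).const_mul K).sub
          ((hder x hx').const_mul ε)).deriv
        simp only [id_eq] at hd
        rw [show deriv (fun t => K * t - ε * f t) x = K * 1 - ε * f' x from hd]
        have : ε * f' x ≤ K := by
          calc ε * f' x ≤ |ε * f' x| := le_abs_self _
            _ = |f' x| := by rw [abs_mul, habs, one_mul]
            _ ≤ K := hbd x hx'
        simpa [mul_one] using sub_nonneg.mpr this
    have := hmono (left_mem_Icc.mpr hδ.le) (right_mem_Icc.mpr hδ.le) hδ.le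
    simp only [hf0, mul_zero, sub_zero] at this
    linarith
  have h1 := key 1 (Or.inl rfl)
  have h2 := key (-1) (Or.inr rfl)
  rw [abs_le]
  constructor <;> linarith

/-- The claim `ẋ_c(0) = 0` in Lemma 2.7: the first coordinate of the (twice
differentiable) center-of-mass curve `g` of an `x`-separated colliding pair has
vanishing derivative at the collision time `t = 0`. -/
theorem stmt17 (T C t1 : ℝ) (hT : 0 < T) (hC : 0 < C) (ht1 : 0 < t1)
    (g : ℝ → Fin 3 → ℝ) (hg : ContDiffAt ℝ 2 g 0) (hg0 : g 0 = 0)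
    (xj xk fxj fxk fxj' fxk' : ℝ → ℝ)
    (hxjcont : ContinuousOn fxj (Icc 0 t1)) (hxkcont : ContinuousOn fxk (Icc 0 t1))
    (hsep : ∀ t ∈ Icc (0:ℝ) T, xj t ≤ xj 0 ∧ xj 0 = xk 0 ∧ xk 0 ≤ xk t)
    (hdecj : ∀ t, xj t = fxj t + g t 0) (hdeck : ∀ t, xk t = fxk t + g t 0)
    (hfxj0 : fxj 0 = 0) (hfxk0 : fxk 0 = 0)
    (hderj : ∀ t ∈ Ioc (0:ℝ) t1, HasDerivAt fxj (fxj' t) t)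
    (hderk : ∀ t ∈ Ioc (0:ℝ) t1, HasDerivAt fxk (fxk' t) t)
    (hbdj : ∀ t ∈ Ioc (0:ℝ) t1, |fxj' t| ≤ C * t ^ ((2:ℝ)/3))
    (hbdk : ∀ t ∈ Ioc (0:ℝ) t1, |fxk' t| ≤ C * t ^ ((2:ℝ)/3)) :
    deriv (fun t => g t 0) 0 = 0 := by
  set g1 : ℝ → ℝ := fun t => g t 0 with hg1def
  have hg10 : g1 0 = 0 := by simp [hg1def, hg0]
  have hxj0 : xj 0 = 0 := by rw [hdecj 0]; simp [hfxj0, hg0]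
  have hxk0 : xk 0 = 0 := by rw [hdeck 0]; simp [hfxk0, hg0]
  -- differentiability of g1 at 0
  have hgd : DifferentiableAt ℝ g 0 := hg.differentiableAt (by norm_num)
  have hg1d : DifferentiableAt ℝ g1 0 := by
    exact ((ContinuousLinearMap.proj (R := ℝ) (φ := fun _ : Fin 3 => ℝ) 0).differentiableAt).comp 0 hgd
  set v := deriv g1 0 with hv
  by_contra hv0
  have hder : HasDerivAt g1 v 0 := hg1d.hasDerivAt
  have hslope : Filter.Tendsto (slope g1 0) (nhdsWithin 0 {(0:ℝ)}ᶜ) (nhds v) :=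
    hasDerivAt_iff_tendsto_slope.mp hder
  have hle : nhdsWithin (0:ℝ) (Ioi 0) ≤ nhdsWithin 0 {(0:ℝ)}ᶜ :=
    nhdsWithin_mono 0 (fun x hx => ne_of_gt hx)
  have hslope' : Filter.Tendsto (slope g1 0) (nhdsWithin 0 (Ioi 0)) (nhds v) :=
    hslope.mono_left hle
  have hv4 : 0 < |v| / 4 := by
    have : 0 < |v| := abs_pos.mpr hv0
    linarith
  have E1 : ∀ᶠ t in nhdsWithin (0:ℝ) (Ioi 0), |slope g1 0 t - v| < |v| / 4 := by
    have := Metric.tendsto_nhds.mp hslope' (|v|/4) hv4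
    simpa [Real.dist_eq] using this
  have hc : Filter.Tendsto (fun t : ℝ => C * t ^ ((2:ℝ)/3)) (nhdsWithin 0 (Ioi 0)) (nhds 0) := by
    have h1 : Filter.Tendsto (fun t : ℝ => t ^ ((2:ℝ)/3)) (nhds 0) (nhds 0) := by
      have := (Real.continuousAt_rpow_const 0 ((2:ℝ)/3) (Or.inr (by norm_num))).tendsto
      simpa [Real.zero_rpow (by norm_num : ((2:ℝ)/3) ≠ 0)] using this
    have h2 : Filter.Tendsto (fun t : ℝ => C * t ^ ((2:ℝ)/3)) (nhds 0) (nhds (C * 0)) :=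
      h1.const_mul C
    have := h2.mono_left (nhdsWithin_le_nhds (s := Ioi (0:ℝ)))
    simpa using this
  have E2 : ∀ᶠ t in nhdsWithin (0:ℝ) (Ioi 0), C * t ^ ((2:ℝ)/3) ≤ |v| / 4 := by
    have := Metric.tendsto_nhds.mp hc (|v|/4) hv4
    filter_upwards [this] with t ht
    rw [Real.dist_eq, sub_zero] at ht
    exact le_of_lt (lt_of_le_of_lt (le_abs_self _) ht)
  have E3 : ∀ᶠ t in nhdsWithin (0:ℝ) (Ioi 0), t ≤ min T t1 := by
    have : Ioc (0:ℝ) (min T t1) ∈ nhdsWithin (0:ℝ) (Ioi 0) :=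
      Ioc_mem_nhdsGT_of_mem ⟨le_refl 0, lt_min hT ht1⟩
    filter_upwards [this] with t ht using ht.2
  have E4 : ∀ᶠ t in nhdsWithin (0:ℝ) (Ioi 0), 0 < t := self_mem_nhdsWithin
  obtain ⟨t, h1, h2, h3, h4⟩ := (E1.and (E2.and (E3.and E4))).exists
  -- bounds from aux
  have htT : t ≤ T := le_trans h3 (min_le_left _ _)
  have htt1 : t ≤ t1 := le_trans h3 (min_le_right _ _)
  have hsub : Ioc (0:ℝ) t ⊆ Ioc 0 t1 := Ioc_subset_Ioc le_rfl htt1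
  have hbd' : ∀ (f' : ℝ → ℝ), (∀ s ∈ Ioc (0:ℝ) t1, |f' s| ≤ C * s ^ ((2:ℝ)/3)) →
      ∀ s ∈ Ioc (0:ℝ) t, |f' s| ≤ C * t ^ ((2:ℝ)/3) := by
    intro f' hb s hs
    refine le_trans (hb s (hsub hs)) ?_
    have : s ^ ((2:ℝ)/3) ≤ t ^ ((2:ℝ)/3) :=
      Real.rpow_le_rpow hs.1.le hs.2 (by norm_num)
    nlinarith [hC.le]
  have hj : |fxj t| ≤ C * t ^ ((2:ℝ)/3) * t :=
    aux17 C t hC.le h4 fxj fxj' (hxjcont.mono (Icc_subset_Icc le_rfl htt1)) hfxj0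
      (fun s hs => hderj s (hsub hs)) (hbd' fxj' hbdj)
  have hk : |fxk t| ≤ C * t ^ ((2:ℝ)/3) * t :=
    aux17 C t hC.le h4 fxk fxk' (hxkcont.mono (Icc_subset_Icc le_rfl htt1)) hfxk0
      (fun s hs => hderk s (hsub hs)) (hbd' fxk' hbdk)
  have hCt : C * t ^ ((2:ℝ)/3) * t ≤ |v| / 4 * t := by nlinarith
  have hslope_eq : slope g1 0 t = g1 t / t := by
    rw [slope_def_field, hg10]; ring_nf
  rw [hslope_eq] at h1
  have hsept := hsep t ⟨h4.le, htT⟩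
  rcases lt_or_gt_of_ne hv0 with hvneg | hvpos
  · -- v < 0 : contradiction with xk 0 ≤ xk t
    have habsv : |v| = -v := abs_of_neg hvneg
    have hg1t : g1 t < (v + |v|/4) * t := by
      have : g1 t / t < v + |v|/4 := by
        have := abs_sub_lt_iff.mp h1
        linarith [this.1]
      calc g1 t = (g1 t / t) * t := by field_simp
        _ < (v + |v|/4) * t := by
            exact mul_lt_mul_of_pos_right this h4
    have hxkt : xk t < 0 := by
      rw [hdeck t]
      have hfk : fxk t ≤ |v|/4 * t := le_trans (le_trans (le_abs_self _) hk) hCt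
      have : g t 0 = g1 t := rfl
      rw [this]
      rw [habsv] at hg1t hfk
      nlinarith
    have := hsept.2.2
    rw [hxk0] at this
    linarith
  · -- v > 0 : contradiction with xj t ≤ xj 0
    have habsv : |v| = v := abs_of_pos hvpos
    have hg1t : (v - |v|/4) * t < g1 t := by
      have : v - |v|/4 < g1 t / t := by
        have := abs_sub_lt_iff.mp h1
        linarith [this.2]
      calc (v - |v|/4) * t < (g1 t / t) * t := mul_lt_mul_of_pos_right this h4
        _ = g1 t := by field_simp
    have hxjt : 0 < xj t := by
      rw [hdecj t]
      have hfj : -(|v|/4 * t) ≤ fxj t := by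
        have := (abs_le.mp hj).1
        linarith [hCt]
      have : g t 0 = g1 t := rfl
      rw [this]
      rw [habsv] at hg1t hfj
      nlinarith
    have := hsept.1
    rw [hxj0] at this
    linarith
end
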